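/- arXiv:2402.06157 — 2 statements merged into one kernel-verified Lean document; each statement's English description precedes it below -/
import Mathlib

section
/- If G is a finite group with a unique subgroup Z of order p for a prime p, and Z ≤ Z(G), then the generator z of Z satisfies: ⟨z, g⟩ is cyclic for every g ∈ G (i.e., z is a universal vertex of the enhanced power graph of G). -/
/-- `K(G)`: the set of elements `x` such that `⟨x, g⟩` is cyclic for all `g ∈ G`
(the universal vertices of the enhanced power graph together with the identity). -/
def KSet (G : Type*) [Group G] : Set G :=
  {x | ∀ g : G, IsCyclic (Subgroup.closure ({x, g} : Set G))}

/-- A group is generalized quaternion if it is isomorphic to `Q_{2^n}` for some `n ≥ 3`. -/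
def IsGeneralizedQuaternion (Q : Type*) [Group Q] : Prop :=
  ∃ n : ℕ, 3 ≤ n ∧ Nonempty (Q ≃* QuaternionGroup (2 ^ (n - 2)))

/-- The enhanced power graph of `G`: vertices are nonidentity elements, with an edge
between distinct `x` and `y` iff `⟨x, y⟩` is cyclic. -/
def enhancedPowerGraph (G : Type*) [Group G] : SimpleGraph {g : G // g ≠ 1} where
  Adj x y := x ≠ y ∧ IsCyclic (Subgroup.closure ({x.1, y.1} : Set G))
  symm := ⟨fun x y => by
    rintro ⟨hne, hc⟩
    exact ⟨hne.symm, by rwa [Set.pair_comm]⟩⟩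
  loopless := ⟨fun x => by simp⟩

lemma isCyclic_zpowers' {G : Type*} [Group G] (w : G) :
    IsCyclic (Subgroup.zpowers w) := by
  refine ⟨⟨⟨w, Subgroup.mem_zpowers w⟩, fun x => ?_⟩⟩
  obtain ⟨k, hk⟩ := Subgroup.mem_zpowers_iff.mp x.2
  exact ⟨k, Subtype.ext (by simpa using hk)⟩

/-- if `Z = ⟨z⟩` is the unique subgroup of order `p` and `Z` is central, then
`⟨z, g⟩` is cyclic for every `g ∈ G`. -/
theorem universal_vertex_of_unique_central_subgroup (G : Type*) [Group G] [Finite G]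
    (p : ℕ) (hp : p.Prime) (z : G) (Z : Subgroup G) (hZz : Z = Subgroup.zpowers z)
    (hcard : Nat.card Z = p)
    (huniq : ∀ X : Subgroup G, Nat.card X = p → X = Z)
    (hcent : Z ≤ Subgroup.center G) :
    ∀ g : G, IsCyclic (Subgroup.closure ({z, g} : Set G)) := by
  intro g
  have hoz : orderOf z = p := by
    rw [← Nat.card_zpowers, ← hZz, hcard]
  have hzg : Commute z g := by
    have : z ∈ Subgroup.center G := hcent (hZz ▸ Subgroup.mem_zpowers z)
    exact (Subgroup.mem_center_iff.mp this g).symm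
  by_cases hg1 : g = 1
  · subst hg1
    have hle : Subgroup.closure ({z, 1} : Set G) ≤ Subgroup.zpowers z := by
      rw [Subgroup.closure_le]
      rintro x (rfl | rfl)
      · exact Subgroup.mem_zpowers _
      · exact Subgroup.one_mem _
    have := isCyclic_zpowers' z
    exact Subgroup.isCyclic_of_le hle
  by_cases hdvd : p ∣ orderOf g
  · -- z ∈ ⟨g⟩
    set h := g ^ (orderOf g / p) with hh
    have hog : orderOf g ≠ 0 := (orderOf_pos g).ne'
    have hoh : orderOf h = p := by
      rw [hh, orderOf_pow]
      have h1 : (orderOf g).gcd (orderOf g / p) = orderOf g / p :=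
        Nat.gcd_eq_right (Nat.div_dvd_of_dvd hdvd)
      rw [h1, Nat.div_div_self hdvd hog]
    have hzp : Subgroup.zpowers h = Z := by
      apply huniq
      rw [Nat.card_zpowers, hoh]
    have hhmem : h ∈ Subgroup.zpowers g :=
      Subgroup.mem_zpowers_iff.mpr ⟨(orderOf g / p : ℕ), by rw [zpow_natCast]⟩
    have hzmem : z ∈ Subgroup.zpowers g := by
      apply Subgroup.zpowers_le.mpr hhmem
      rw [hzp, hZz]; exact Subgroup.mem_zpowers z
    have hle : Subgroup.closure ({z, g} : Set G) ≤ Subgroup.zpowers g := by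
      rw [Subgroup.closure_le]
      rintro x (rfl | rfl)
      · exact hzmem
      · exact Subgroup.mem_zpowers _
    have := isCyclic_zpowers' g
    exact Subgroup.isCyclic_of_le hle
  · -- coprime case
    set n := orderOf g with hn
    have hog : n ≠ 0 := (orderOf_pos g).ne'
    have hn1 : 1 < n := by
      rcases Nat.lt_or_ge n 2 with h | h
      · interval_cases n
        · exact absurd rfl hog
        · exact absurd (orderOf_eq_one_iff.mp hn.symm) hg1
      · exact h
    have hcop : Nat.Coprime p n := (Nat.Prime.coprime_iff_not_dvd hp).mpr hdvd
    set w := z * g with hw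
    have hwn : ∀ m : ℕ, w ^ m = z ^ m * g ^ m := fun m => hzg.mul_pow m
    have hzmem : z ∈ Subgroup.zpowers w := by
      have hwzn : w ^ n = z ^ n := by
        rw [hwn, pow_orderOf_eq_one, mul_one]
      obtain ⟨m, -, hm⟩ := Nat.exists_mul_mod_eq_one_of_coprime hcop.symm hp.one_lt
      refine Subgroup.mem_zpowers_iff.mpr ⟨((n * m : ℕ) : ℤ), ?_⟩
      rw [zpow_natCast, pow_mul, hwzn, ← pow_mul, ← pow_mod_orderOf, hoz, hm, pow_one]
    have hgmem : g ∈ Subgroup.zpowers w := by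
      have hwzp : w ^ p = g ^ p := by
        rw [hwn, ← hoz, pow_orderOf_eq_one, one_mul]
      obtain ⟨m, -, hm⟩ := Nat.exists_mul_mod_eq_one_of_coprime hcop hn1
      refine Subgroup.mem_zpowers_iff.mpr ⟨((p * m : ℕ) : ℤ), ?_⟩
      rw [zpow_natCast, pow_mul, hwzp, ← pow_mul, ← pow_mod_orderOf, ← hn, hm, pow_one]
    have hle : Subgroup.closure ({z, g} : Set G) ≤ Subgroup.zpowers w := by
      rw [Subgroup.closure_le]
      rintro x (rfl | rfl)
      · exact hzmem
      · exact hgmem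
    have := isCyclic_zpowers' w
    exact Subgroup.isCyclic_of_le hle
end

section
/- Let G be a finite solvable group whose Sylow 2-subgroup P is generalized quaternion, and suppose 2 divides |K(G)|. Then |K(G)|_2 = 2, i.e., the Sylow 2-subgroup of K(G) has order exactly 2, and K(G) ∩ P = Z(P). -/
open Subgroup

section KHelpers

variable {G : Type*} [Group G]

lemma isCyclic_of_le' {H L : Subgroup G} (h : H ≤ L) (hL : IsCyclic L) : IsCyclic H := by
  haveI := hL
  exact Subgroup.isCyclic_of_le h

lemma isCyclic_zpowers'_s9 (g : G) : IsCyclic (Subgroup.zpowers g) := by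
  refine ⟨⟨⟨g, Subgroup.mem_zpowers g⟩, ?_⟩⟩
  rintro ⟨x, hx⟩
  obtain ⟨k, rfl⟩ := Subgroup.mem_zpowers_iff.mp hx
  exact ⟨k, by ext; simp⟩

lemma KSet_commute {x : G} (hx : x ∈ KSet G) (g : G) : Commute x g := by
  have h := hx g
  have hxm : x ∈ closure ({x, g} : Set G) := subset_closure (by simp)
  have hgm : g ∈ closure ({x, g} : Set G) := subset_closure (by simp)
  letI := h
  letI : CommGroup (closure ({x, g} : Set G)) := IsCyclic.commGroup
  have : (⟨x, hxm⟩ : closure ({x, g} : Set G)) * ⟨g, hgm⟩ = ⟨g, hgm⟩ * ⟨x, hxm⟩ :=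
    mul_comm _ _
  exact congrArg Subtype.val this

/-- `K(G)` as a subgroup. -/
def KSubgroup (G : Type*) [Group G] : Subgroup G where
  carrier := KSet G
  one_mem' := by
    intro g
    refine isCyclic_of_le' (L := Subgroup.zpowers g) ?_ (isCyclic_zpowers'_s9 g)
    rw [closure_le]
    rintro y (rfl | rfl)
    · exact one_mem _
    · exact mem_zpowers _
  inv_mem' := by
    intro x hx g
    refine isCyclic_of_le' (L := closure ({x, g} : Set G)) ?_ (hx g)
    rw [closure_le]
    rintro y (rfl | rfl)
    · exact inv_mem (subset_closure (by simp))
    · exact subset_closure (by simp)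
  mul_mem' := by
    intro x y hx hy g
    obtain ⟨c, hc⟩ := (hx g).exists_generator
    have hxc : x ∈ Subgroup.zpowers (c : G) := by
      obtain ⟨k, hk⟩ := hc ⟨x, subset_closure (by simp)⟩
      exact ⟨k, congrArg Subtype.val hk⟩
    have hgc : g ∈ Subgroup.zpowers (c : G) := by
      obtain ⟨k, hk⟩ := hc ⟨g, subset_closure (by simp)⟩
      exact ⟨k, congrArg Subtype.val hk⟩
    refine isCyclic_of_le' (L := closure ({y, (c : G)} : Set G)) ?_ (hy (c : G))
    have hcC : Subgroup.zpowers (c : G) ≤ closure ({y, (c : G)} : Set G) := by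
      rw [Subgroup.zpowers_le]
      exact subset_closure (by simp)
    rw [closure_le]
    rintro z (rfl | rfl)
    · exact mul_mem (hcC hxc) (subset_closure (by simp))
    · exact hcC hgc

lemma mem_sylow_of_central [Finite G] (P : Sylow 2 G) {x : G}
    (hx : ∀ g : G, Commute x g) (hord : ∃ k : ℕ, x ^ (2 : ℕ) ^ k = 1) :
    x ∈ (P : Subgroup G) := by
  haveI : Fact (Nat.Prime 2) := ⟨Nat.prime_two⟩
  have hpg : IsPGroup 2 (Subgroup.zpowers x) := by
    rintro ⟨z, m, rfl⟩
    obtain ⟨k, hk⟩ := hord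
    refine ⟨k, ?_⟩
    ext
    push_cast
    rw [← zpow_natCast, ← zpow_mul, mul_comm, zpow_mul, zpow_natCast, hk, one_zpow]
  obtain ⟨Q, hQ⟩ := hpg.exists_le_sylow
  obtain ⟨g, rfl⟩ := MulAction.exists_smul_eq G Q P
  have hxQ : x ∈ (Q : Subgroup G) := hQ (Subgroup.mem_zpowers x)
  show x ∈ ((g • Q : Sylow 2 G) : Subgroup G)
  rw [Sylow.smul_def, Sylow.pointwise_smul_def,
    Subgroup.mem_pointwise_smul_iff_inv_smul_mem]
  have : (MulAut.conj g)⁻¹ • x = x := by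
    rw [MulAut.smul_def, MulAut.conj_inv_apply, ← (hx g⁻¹).eq, inv_mul_cancel_right]
  rw [this]; exact hxQ

lemma card_center_congr {H : Type*} [Group H] (e : G ≃* H) :
    Nat.card (Subgroup.center G) = Nat.card (Subgroup.center H) := by
  refine Nat.card_congr ⟨fun x => ⟨e x.1, ?_⟩, fun y => ⟨e.symm y.1, ?_⟩, ?_, ?_⟩
  · rw [Subgroup.mem_center_iff]
    intro h
    rw [← e.apply_symm_apply h, ← map_mul, ← map_mul,
      Subgroup.mem_center_iff.mp x.2 _]
  · rw [Subgroup.mem_center_iff]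
    intro h
    rw [← e.symm.apply_symm_apply h, ← map_mul, ← map_mul,
      Subgroup.mem_center_iff.mp y.2 _]
  · intro x; ext; simp
  · intro y; ext; simp

lemma quaternion_center_card (n : ℕ) (hn : 2 ≤ n) :
    Nat.card (Subgroup.center (QuaternionGroup n)) = 2 := by
  haveI : NeZero (2 * n) := ⟨by omega⟩
  have h2n0 : ((2 * n : ℕ) : ZMod (2 * n)) = 0 := ZMod.natCast_self _
  have hcar : (Subgroup.center (QuaternionGroup n) : Set (QuaternionGroup n)) =
      {QuaternionGroup.a 0, QuaternionGroup.a (n : ZMod (2 * n))} := by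
    ext x
    simp only [SetLike.mem_coe, Subgroup.mem_center_iff, Set.mem_insert_iff,
      Set.mem_singleton_iff]
    constructor
    · intro h
      cases x with
      | a i =>
        have h1 := h (QuaternionGroup.xa 0)
        simp only [QuaternionGroup.xa_mul_a, QuaternionGroup.a_mul_xa, zero_add, zero_sub,
          QuaternionGroup.xa.injEq] at h1
        have h2 : ((2 * i.val : ℕ) : ZMod (2 * n)) = 0 := by
          push_cast [ZMod.natCast_val, ZMod.cast_id]
          linear_combination h1
        obtain ⟨c, hc⟩ := (ZMod.natCast_eq_zero_iff _ _).mp h2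
        have h4 : i.val < 2 * n := ZMod.val_lt i
        have hc' : i.val = n * c := by
          have : 2 * i.val = 2 * (n * c) := by rw [hc]; ring
          omega
        have hclt : c < 2 := by nlinarith
        have hi : i = ((i.val : ℕ) : ZMod (2 * n)) := (ZMod.natCast_rightInverse i).symm
        interval_cases c
        · left; rw [hi, hc']; norm_num
        · right; rw [hi, hc']; norm_num
      | xa i =>
        exfalso
        have h1 := h (QuaternionGroup.a 1)
        simp only [QuaternionGroup.a_mul_xa, QuaternionGroup.xa_mul_a,
          QuaternionGroup.xa.injEq] at h1
        have h2 : ((2 : ℕ) : ZMod (2 * n)) = 0 := by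
          push_cast
          linear_combination -h1
        have := Nat.le_of_dvd (by norm_num) ((ZMod.natCast_eq_zero_iff _ _).mp h2)
        omega
    · have hnn : (n : ZMod (2 * n)) = -(n : ZMod (2 * n)) := by
        have h' : ((2 * n : ℕ) : ZMod (2 * n)) = 0 := h2n0
        push_cast at h'
        linear_combination h'
      rintro (rfl | rfl) g
      · cases g with
        | a j => simp
        | xa j => simp
      · cases g with
        | a j => simp [add_comm]
        | xa j =>
          simp only [QuaternionGroup.xa_mul_a, QuaternionGroup.a_mul_xa,
            QuaternionGroup.xa.injEq]
          rw [sub_eq_add_neg, ← hnn]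
  have hne : QuaternionGroup.a (0 : ZMod (2 * n)) ≠ QuaternionGroup.a (n : ZMod (2 * n)) := by
    intro h
    have := (QuaternionGroup.a.injEq _ _).mp h
    have hv : ((n : ℕ) : ZMod (2 * n)).val = n := ZMod.val_cast_of_lt (by omega)
    rw [← this] at hv
    simp [ZMod.val_zero] at hv
    omega
  calc Nat.card (Subgroup.center (QuaternionGroup n))
      = Nat.card ((Subgroup.center (QuaternionGroup n) : Set (QuaternionGroup n))) := rfl
    _ = Nat.card (({QuaternionGroup.a 0, QuaternionGroup.a (n : ZMod (2 * n))} :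
        Set (QuaternionGroup n))) := by rw [hcar]
    _ = 2 := by rw [Nat.card_coe_set_eq, Set.ncard_pair hne]

end KHelpers

/-- if `G` is finite solvable with generalized quaternion Sylow `2`-subgroup `P`
and `2 ∣ |K(G)|`, then the `2`-part of `|K(G)|` is exactly `2` and `K(G) ∩ P = Z(P)`. -/
theorem two_part_KSet_eq_two (G : Type*) [Group G] [Finite G]
    (hs : IsSolvable G) (P : Sylow 2 G)
    (hP : IsGeneralizedQuaternion (P : Subgroup G))
    (h2 : 2 ∣ Nat.card ↥(KSet G)) :
    (Nat.card ↥(KSet G)).factorization 2 = 1 ∧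
    KSet G ∩ ((P : Subgroup G) : Set G) =
      (((Subgroup.center (P : Subgroup G)).map (P : Subgroup G).subtype : Subgroup G) :
        Set G) := by
  haveI : Fact (Nat.Prime 2) := ⟨Nat.prime_two⟩
  obtain ⟨n, hn3, ⟨e⟩⟩ := hP
  set Pg : Subgroup G := (P : Subgroup G) with hPg
  set Z' : Subgroup G := (Subgroup.center Pg).map Pg.subtype with hZ'
  set K : Subgroup G := KSubgroup G with hK
  -- the cardinality of Z' is 2
  have hm : 2 ≤ 2 ^ (n - 2) := by
    calc 2 = 2 ^ 1 := rfl
    _ ≤ 2 ^ (n - 2) := Nat.pow_le_pow_right (by norm_num) (by omega)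
  have hZcard : Nat.card Z' = 2 := by
    have h1 : Nat.card Z' = Nat.card (Subgroup.center Pg) :=
      Nat.card_congr (Subgroup.equivMapOfInjective _ _ Pg.subtype_injective).symm.toEquiv
    rw [h1, card_center_congr e, quaternion_center_card _ hm]
  have hKcard : Nat.card ↥(KSet G) = Nat.card K := rfl
  -- central elements of 2-power order lie in Z'
  have hmemZ' : ∀ x : G, x ∈ KSet G → (∃ k : ℕ, x ^ (2 : ℕ) ^ k = 1) → x ∈ Z' := by
    intro x hx hord
    have hxP : x ∈ Pg := mem_sylow_of_central P (KSet_commute hx) hord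
    refine ⟨⟨x, hxP⟩, ?_, rfl⟩
    simp only [SetLike.mem_coe, Subgroup.mem_center_iff]
    intro g
    exact Subtype.ext ((KSet_commute hx g.1).symm.eq)
  -- a Sylow 2-subgroup of K embeds into Z'
  obtain ⟨S⟩ : Nonempty (Sylow 2 K) := inferInstance
  have hSle : S.1.map K.subtype ≤ Z' := by
    rintro _ ⟨s, hs, rfl⟩
    refine hmemZ' _ s.2 ?_
    obtain ⟨k, hk⟩ := S.isPGroup' ⟨s, hs⟩
    exact ⟨k, by simpa using congrArg (fun z : ↥S.1 => ((z : ↥K) : G)) hk⟩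
  have hSc : Nat.card S.1 = 2 ^ (Nat.card K).factorization 2 := Sylow.card_eq_multiplicity S
  have hdvd : Nat.card S.1 ∣ 2 := by
    have heq : Nat.card S.1 = Nat.card (S.1.map K.subtype) :=
      Nat.card_congr (Subgroup.equivMapOfInjective _ _ K.subtype_injective).toEquiv
    have hd : Nat.card S.1 ∣ Nat.card Z' := by
      rw [heq]; exact Subgroup.card_dvd_of_le hSle
    rwa [hZcard] at hd
  have hdvd2 : (2 : ℕ) ^ (Nat.card K).factorization 2 ∣ 2 ^ 1 := by
    rw [pow_one, ← hSc]; exact hdvd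
  have hle1 : (Nat.card K).factorization 2 ≤ 1 :=
    (Nat.pow_dvd_pow_iff_le_right (by norm_num : 1 < 2)).mp hdvd2
  have hge1 : 1 ≤ (Nat.card K).factorization 2 :=
    (Nat.Prime.factorization_pos_of_dvd Nat.prime_two Nat.card_pos.ne' (hKcard ▸ h2))
  have hfact : (Nat.card ↥(KSet G)).factorization 2 = 1 := by
    rw [hKcard]; omega
  refine ⟨hfact, ?_⟩
  -- the element of order 2 in K
  obtain ⟨t, ht⟩ := exists_prime_orderOf_dvd_card' (G := ↥K) 2 (hKcard ▸ h2)
  have htG : orderOf (t : G) = 2 := by rw [Subgroup.orderOf_coe, ht]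
  have htZ' : (t : G) ∈ Z' := by
    refine hmemZ' _ t.2 ⟨1, ?_⟩
    have := pow_orderOf_eq_one t
    rw [ht] at this
    simpa using congrArg (fun z : ↥K => (z : G)) this
  have hzple : Subgroup.zpowers (t : G) ≤ Z' := Subgroup.zpowers_le.mpr htZ'
  have hZ'le : ∀ x ∈ Z', x ∈ Subgroup.zpowers (t : G) := by
    have hcard : Nat.card ((Subgroup.zpowers (t : G)).subgroupOf Z') = Nat.card Z' := by
      rw [hZcard]
      calc Nat.card ((Subgroup.zpowers (t : G)).subgroupOf Z')
          = Nat.card (Subgroup.zpowers (t : G)) :=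
            Nat.card_congr (Subgroup.subgroupOfEquivOfLe hzple).toEquiv
      _ = 2 := by rw [Nat.card_zpowers, htG]
    have htop := Subgroup.eq_top_of_card_eq _ hcard
    intro x hx
    have : (⟨x, hx⟩ : Z') ∈ (Subgroup.zpowers (t : G)).subgroupOf Z' := htop ▸ trivial
    exact this
  ext x
  constructor
  · rintro ⟨hxK, hxP⟩
    refine ⟨⟨x, hxP⟩, ?_, rfl⟩
    simp only [SetLike.mem_coe, Subgroup.mem_center_iff]
    intro g
    exact Subtype.ext ((KSet_commute hxK g.1).symm.eq)
  · intro hx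
    have hxZ : x ∈ Z' := hx
    obtain ⟨m, rfl⟩ := Subgroup.mem_zpowers_iff.mp (hZ'le x hxZ)
    have hxK : (t : G) ^ m ∈ K := Subgroup.zpow_mem K t.2 m
    have hxP : (t : G) ^ m ∈ Pg := by
      obtain ⟨y, _, hy⟩ := hxZ
      exact hy ▸ y.2
    exact ⟨hxK, hxP⟩
end
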